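/- Let P be a pyramid with row lengths r_1 ≥ ... ≥ r_N ≥ 1 together with a parity assignment π : {1,...,N} → {0,1} on its rows, and let p (resp. q) be the multiset of lengths of the rows j with π(j) = 0 (resp. π(j) = 1). Let V(P)_0 (resp. V(P)_1) be the span of the basis vectors v_{(j,c)} with π(j) = 0 (resp. π(j) = 1). Then: e(P) and h(P) both preserve V(P)_0 and V(P)_1; the restriction of e(P) to V(P)_0 is nilpotent of Jordan type p and its restriction to V(P)_1 is nilpotent of Jordan type q; ⁅h(P), e(P)⁆ = 2 • e(P); and the pair (h(P), e(P)) is good in End(V(P)): ad e(P) is injective from the j-eigenspace of ad h(P) to the (j+2)-eigenspace for every integer j ≤ -1 and surjective for every integer j ≥ -1. (This is the forward direction of the classification of good ℤ-gradings of gl(m|n) by pyramids, since for an even element e of gl(m|n) the super adjoint action of e coincides with the commutator action on all of End(V).) -/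

import Mathlib

/-!
In the basis of boxes `h(P)` is diagonal with the columns as eigenvalues, so the `j`-th graded
piece of `End V(P)` consists of the matrices supported on pairs of boxes whose columns differ by
`j`, and `ad e(P)` acts along the diagonals of each block `Hom(row a', row a)`:
`[e, X](a, i; a', i') = X(a, i - 1; a', i') - X(a, i; a', i' + 1)`, entries off the pyramid being
zero. Of any two rows one is nested in the other. A matrix commuting with `e(P)` is therefore
constant along diagonals, and in negative degree the nesting pushes every diagonal against an end
of a row, where the entries vanish: this is injectivity. In degree `j ≥ -1`, a preimage of `Y` is
obtained by telescoping `Y` along each diagonal, in the direction in which the nesting kills the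
boundary terms. The Jordan type of `e(P)` on `V(P)_i` is read off from `ker e(P)^k`, which is
spanned by the last `k` boxes of each row of parity `i`.
-/

/-- A pyramid with row lengths `r 0 ≥ r 1 ≥ ... ≥ r (N-1) ≥ 1` (bottom row first).
Row `j` consists of boxes at columns `f j, f j + 2, ..., l j` where
`l j = f j + 2 * (r j - 1)`; the bottom row is centered at `0` (`f 0 = -(l 0)`), and
consecutive rows satisfy `f j ≤ f (j+1) ≤ l (j+1) ≤ l j`. -/
structure Pyramid where
  N : ℕ
  hN : 0 < N
  r : Fin N → ℕ
  f : Fin N → ℤ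
  r_pos : ∀ j, 0 < r j
  r_anti : ∀ i j : Fin N, i ≤ j → r j ≤ r i
  centered : f ⟨0, hN⟩ = -(f ⟨0, hN⟩ + 2 * ((r ⟨0, hN⟩ : ℤ) - 1))
  left_nested : ∀ i j : Fin N, (i : ℕ) + 1 = (j : ℕ) → f i ≤ f j
  right_nested : ∀ i j : Fin N, (i : ℕ) + 1 = (j : ℕ) →
    f j + 2 * ((r j : ℤ) - 1) ≤ f i + 2 * ((r i : ℤ) - 1)

namespace Pyramid

/-- The set of boxes of the pyramid: the `i`-th box (from the left) of row `j`. -/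
abbrev Box (P : Pyramid) : Type := (j : Fin P.N) × Fin (P.r j)

/-- The column (first coordinate) of a box: box `(j, i)` sits at column `f j + 2 * i`. -/
def col (P : Pyramid) (b : P.Box) : ℤ := P.f b.1 + 2 * (b.2 : ℤ)

/-- The vector space `V(P) = ℂ^{B(P)}`. -/
abbrev V (P : Pyramid) : Type := P.Box → ℂ

/-- The nilpotent endomorphism `e(P)` of `V(P)`, sending the basis vector of a box to
the basis vector of its right neighbour (i.e. the box in the same row whose column is
larger by 2), or to `0` if there is no right neighbour. -/
noncomputable def E (P : Pyramid) : Module.End ℂ P.V :=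
  Matrix.toLin' (Matrix.of fun b b' : P.Box =>
    if b.1 = b'.1 ∧ (b.2 : ℕ) = (b'.2 : ℕ) + 1 then (1 : ℂ) else 0)

/-- The semisimple endomorphism `h(P)` of `V(P)`, acting on the basis vector of a box
by its column. -/
noncomputable def H (P : Pyramid) : Module.End ℂ P.V :=
  Matrix.toLin' (Matrix.diagonal fun b : P.Box => (P.col b : ℂ))

end Pyramid

/-- The set of `ad h`-eigenvectors of `End(V)` with eigenvalue `j ∈ ℤ`:
the `j`-th graded piece of the `ℤ`-grading of `End(V)` determined by `h`. -/
def gradedPiece {V : Type*} [AddCommGroup V] [Module ℂ V]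
    (h : Module.End ℂ V) (j : ℤ) : Set (Module.End ℂ V) :=
  {x | ⁅h, x⁆ = (j : ℂ) • x}

/-- The pair `(h, e)` is *good* if `ad e` is injective from the `j`-eigenspace of
`ad h` to the `(j+2)`-eigenspace for every integer `j ≤ -1`, and surjective onto the
`(j+2)`-eigenspace for every integer `j ≥ -1`. -/
def IsGoodPair {V : Type*} [AddCommGroup V] [Module ℂ V]
    (h e : Module.End ℂ V) : Prop :=
  (∀ j : ℤ, j ≤ -1 →
    Set.InjOn (fun x : Module.End ℂ V => ⁅e, x⁆) (gradedPiece h j)) ∧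
  (∀ j : ℤ, -1 ≤ j →
    Set.SurjOn (fun x : Module.End ℂ V => ⁅e, x⁆) (gradedPiece h j)
      (gradedPiece h (j + 2)))
/-- Given a parity assignment `π` on the rows of a pyramid `P`, the subspace
`V(P)_i` of `V(P)` spanned by the basis vectors of boxes lying in rows of parity
`i`. -/
noncomputable def Pyramid.Vpart (P : Pyramid) (π : Fin P.N → Fin 2) (i : Fin 2) :
    Submodule ℂ P.V where
  carrier := {v | ∀ b : P.Box, π b.1 ≠ i → v b = 0}
  add_mem' := by
    intro x y hx hy b hb
    simp [Pi.add_apply, hx b hb, hy b hb]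
  zero_mem' := by intro b hb; rfl
  smul_mem' := by
    intro c v hv b hb
    simp [Pi.smul_apply, hv b hb]

lemma Fin.monotone_of_le_of_val_add_one_eq {n : ℕ} {α : Type*} [Preorder α] {g : Fin n → α}
    (hg : ∀ i j : Fin n, (i : ℕ) + 1 = j → g i ≤ g j) : Monotone g := by
  cases n with
  | zero => exact fun i => i.elim0
  | succ n => exact Fin.monotone_iff_le_succ.mpr fun i => hg _ _ (by simp)

lemma Fin.card_filter_le_add (r k : ℕ) :
    (Finset.univ.filter fun x : Fin r => r ≤ x + k).card = min k r := by
  rw [← Finset.card_map Fin.valEmbedding,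
    show (Finset.univ.filter fun x : Fin r => r ≤ x + k).map Fin.valEmbedding =
      Finset.Ico (r - k) r by
      ext x
      simp only [Finset.mem_map, Finset.mem_filter, Finset.mem_univ, true_and,
        Fin.valEmbedding_apply, Finset.mem_Ico]
      exact ⟨fun ⟨a, h, e⟩ => e ▸ ⟨by omega, a.2⟩, fun h => ⟨⟨x, h.2⟩, by simp only; omega, rfl⟩⟩,
    Nat.card_Ico]
  omega

lemma Finset.sum_range_eq_add_sum_range_succ {M : Type*} [AddCommMonoid M] (g : ℕ → M) {n : ℕ}
    (hn : g n = 0) : ∑ t ∈ range n, g t = g 0 + ∑ t ∈ range n, g (t + 1) := by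
  have := sum_range_succ' g n
  rw [sum_range_succ, hn, add_zero] at this
  rw [this, add_comm]

lemma LinearMap.toMatrix'_lie {n R : Type*} [Fintype n] [DecidableEq n] [CommRing R]
    (x y : Module.End R (n → R)) :
    LinearMap.toMatrix' ⁅x, y⁆ = ⁅LinearMap.toMatrix' x, LinearMap.toMatrix' y⁆ := by
  rw [Ring.lie_def, Ring.lie_def, map_sub, LinearMap.toMatrix'_mul, LinearMap.toMatrix'_mul]

namespace Pyramid

variable {P : Pyramid}

variable (P) in
def last (a : Fin P.N) : ℤ := P.f a + 2 * ((P.r a : ℤ) - 1)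

lemma f_mono : Monotone P.f := Fin.monotone_of_le_of_val_add_one_eq P.left_nested

lemma last_anti : Antitone P.last :=
  Fin.monotone_of_le_of_val_add_one_eq (α := ℤᵒᵈ) P.right_nested

lemma f_le_col (b : P.Box) : P.f b.1 ≤ P.col b := by
  simp only [col]; omega

lemma col_le_last (b : P.Box) : P.col b ≤ P.last b.1 := by
  have := b.2.2; simp only [col, last]; omega

lemma f_le_col_of_le {a : Fin P.N} {b : P.Box} (h : a ≤ b.1) : P.f a ≤ P.col b :=
  (f_mono h).trans (f_le_col b)

lemma col_le_last_of_le {a : Fin P.N} {b : P.Box} (h : a ≤ b.1) : P.col b ≤ P.last a :=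
  (col_le_last b).trans (last_anti h)

lemma exists_box {a : Fin P.N} {i : ℤ} (h0 : 0 ≤ i) (h : i < P.r a) :
    ∃ b : P.Box, b.1 = a ∧ (b.2 : ℤ) = i :=
  ⟨⟨a, ⟨i.toNat, by omega⟩⟩, rfl, by simp [h0]⟩

section extend

variable {M : Type*}

variable (P) in
/-- Position `i` of row `a` is column `f a + 2 i`. Extending by zero off the pyramid removes the
boundary cases of the shift: `e(P) v (a, i) = v (a, i - 1)` for every box. -/
def extend [Zero M] (v : P.Box → M) (a : Fin P.N) (i : ℤ) : M :=
  if h : 0 ≤ i ∧ i < P.r a then v ⟨a, ⟨i.toNat, by omega⟩⟩ else 0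

@[simp]
lemma extend_box [Zero M] (v : P.Box → M) (b : P.Box) : P.extend v b.1 b.2 = v b := by
  simp [extend, b.2.2]

lemma extend_eq_zero [Zero M] (v : P.Box → M) {a : Fin P.N} {i : ℤ}
    (h : ¬(0 ≤ i ∧ i < P.r a)) : P.extend v a i = 0 :=
  dif_neg h

lemma sum_ite_eq_extend [AddCommMonoid M] (v : P.Box → M) (a : Fin P.N) (i : ℤ) :
    ∑ c : P.Box, (if c.1 = a ∧ (c.2 : ℤ) = i then v c else 0) = P.extend v a i := by
  unfold extend
  split_ifs with h
  · rw [Fintype.sum_eq_single ⟨a, ⟨i.toNat, by omega⟩⟩, if_pos ⟨rfl, by simp [h.1]⟩]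
    rintro ⟨a', x⟩ hne
    refine if_neg ?_
    rintro ⟨rfl, hx⟩
    exact hne (Sigma.ext rfl (heq_of_eq (Fin.ext (by simp only at hx ⊢; omega))))
  · refine Finset.sum_eq_zero fun ⟨a', x⟩ _ => if_neg ?_
    rintro ⟨rfl, hx⟩
    exact h ⟨by omega, by have := x.2; omega⟩

end extend

lemma E_apply (v : P.V) (b : P.Box) : P.E v b = P.extend v b.1 (b.2 - 1) := by
  rw [E, Matrix.toLin'_apply, Matrix.mulVec, dotProduct, ← sum_ite_eq_extend]
  refine Finset.sum_congr rfl fun c _ => ?_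
  simp only [Matrix.of_apply, ite_mul, one_mul, zero_mul]
  exact if_congr ⟨fun h => ⟨h.1.symm, by omega⟩, fun h => ⟨h.1.symm, by omega⟩⟩ rfl rfl

lemma E_pow_apply (k : ℕ) (v : P.V) (b : P.Box) :
    (P.E ^ k) v b = P.extend v b.1 (b.2 - k) := by
  induction k generalizing b with
  | zero => simp
  | succ k ih =>
    rw [pow_succ', Module.End.mul_apply, E_apply, extend]
    split_ifs with h
    · rw [ih]; congr 1; simp only [Int.toNat_of_nonneg h.1]; omega
    · exact (extend_eq_zero v (by omega)).symm

lemma H_apply (v : P.V) (b : P.Box) : P.H v b = P.col b * v b := by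
  rw [H, Matrix.toLin'_apply, Matrix.mulVec_diagonal]

lemma extend_H (v : P.V) (a : Fin P.N) (i : ℤ) :
    P.extend (P.H v) a i = (P.f a + 2 * i : ℤ) * P.extend v a i := by
  unfold extend
  split_ifs with h
  · rw [H_apply, col]; simp [Int.toNat_of_nonneg h.1]
  · rw [mul_zero]

lemma lie_H_E : ⁅P.H, P.E⁆ = (2 : ℂ) • P.E := by
  refine LinearMap.ext fun v => funext fun b => ?_
  simp only [Ring.lie_def, LinearMap.sub_apply, Module.End.mul_apply, LinearMap.smul_apply,
    Pi.sub_apply, Pi.smul_apply, smul_eq_mul, E_apply, H_apply, extend_H, col]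
  push_cast
  ring

lemma E_pow_eq_zero {k : ℕ} (hk : ∀ a, P.r a ≤ k) : P.E ^ k = 0 :=
  LinearMap.ext fun v => funext fun b => by
    rw [E_pow_apply]
    exact extend_eq_zero v (by have := b.2.2; have := hk b.1; omega)

lemma isNilpotent_E : IsNilpotent P.E :=
  ⟨∑ a, P.r a, E_pow_eq_zero fun a => Finset.single_le_sum (by simp) (Finset.mem_univ a)⟩

lemma E_pow_apply_eq_zero_iff (k : ℕ) (v : P.V) :
    (P.E ^ k) v = 0 ↔ ∀ b : P.Box, (b.2 : ℕ) + k < P.r b.1 → v b = 0 := by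
  constructor
  · intro h b hb
    have := congrFun h ⟨b.1, ⟨b.2 + k, hb⟩⟩
    simpa only [E_pow_apply, Nat.cast_add, add_sub_cancel_right, extend_box, Pi.zero_apply]
      using this
  · intro h
    funext b
    rw [E_pow_apply, extend]
    split_ifs with hb
    exacts [h _ (by simp only; omega), rfl]

variable (P) in
def entry (A : Matrix P.Box P.Box ℂ) (a : Fin P.N) (i : ℤ) (a' : Fin P.N) (i' : ℤ) : ℂ :=
  if h : 0 ≤ i ∧ i < P.r a ∧ 0 ≤ i' ∧ i' < P.r a' then
    A ⟨a, ⟨i.toNat, by omega⟩⟩ ⟨a', ⟨i'.toNat, by omega⟩⟩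
  else 0

lemma entry_eq_zero {A : Matrix P.Box P.Box ℂ} {a a' : Fin P.N} {i i' : ℤ}
    (h : ¬(0 ≤ i ∧ i < P.r a ∧ 0 ≤ i' ∧ i' < P.r a')) : P.entry A a i a' i' = 0 :=
  dif_neg h

@[simp]
lemma entry_zero (a a' : Fin P.N) (i i' : ℤ) : P.entry 0 a i a' i' = 0 := by
  unfold entry; split_ifs <;> rfl

lemma entry_of (S : Fin P.N → ℤ → Fin P.N → ℤ → ℂ) (a a' : Fin P.N) (i i' : ℤ) :
    P.entry (Matrix.of fun b b' => S b.1 b.2 b'.1 b'.2) a i a' i' =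
      if 0 ≤ i ∧ i < P.r a ∧ 0 ≤ i' ∧ i' < P.r a' then S a i a' i' else 0 := by
  unfold entry
  split_ifs with h
  · simp [Int.toNat_of_nonneg h.1, Int.toNat_of_nonneg h.2.2.1]
  · rfl

lemma entry_eq_extend_col (A : Matrix P.Box P.Box ℂ) (a : Fin P.N) (i : ℤ) (b' : P.Box) :
    P.entry A a i b'.1 b'.2 = P.extend (fun c => A c b') a i := by
  unfold entry extend
  split_ifs <;> first | rfl | simp_all

lemma entry_eq_extend_row (A : Matrix P.Box P.Box ℂ) (b : P.Box) (a' : Fin P.N) (i' : ℤ) :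
    P.entry A b.1 b.2 a' i' = P.extend (A b) a' i' := by
  unfold entry extend
  split_ifs <;> first | rfl | simp_all

@[simp]
lemma entry_box (A : Matrix P.Box P.Box ℂ) (b b' : P.Box) :
    P.entry A b.1 b.2 b'.1 b'.2 = A b b' := by
  rw [entry_eq_extend_col, extend_box]

lemma entry_eq_zero_of_ne {A : Matrix P.Box P.Box ℂ} {j : ℤ}
    (hA : ∀ b b', P.col b - P.col b' ≠ j → A b b' = 0) {a a' : Fin P.N} {i i' : ℤ}
    (h : P.f a + 2 * i - (P.f a' + 2 * i') ≠ j) : P.entry A a i a' i' = 0 := by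
  by_cases hbox : 0 ≤ i ∧ i < P.r a ∧ 0 ≤ i' ∧ i' < P.r a'
  · obtain ⟨b, rfl, rfl⟩ := exists_box hbox.1 hbox.2.1
    obtain ⟨b', rfl, rfl⟩ := exists_box hbox.2.2.1 hbox.2.2.2
    rw [entry_box]
    exact hA b b' h
  · exact entry_eq_zero hbox

lemma toMatrix'_E_mul_apply (A : Matrix P.Box P.Box ℂ) (b b' : P.Box) :
    (LinearMap.toMatrix' P.E * A) b b' = P.entry A b.1 (b.2 - 1) b'.1 b'.2 := by
  rw [entry_eq_extend_col, ← E_apply, E, Matrix.toLin'_apply, LinearMap.toMatrix'_toLin']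
  rfl

lemma mul_toMatrix'_E_apply (A : Matrix P.Box P.Box ℂ) (b b' : P.Box) :
    (A * LinearMap.toMatrix' P.E) b b' = P.entry A b.1 b.2 b'.1 (b'.2 + 1) := by
  rw [entry_eq_extend_row, E, LinearMap.toMatrix'_toLin', Matrix.mul_apply, ← sum_ite_eq_extend]
  refine Finset.sum_congr rfl fun c _ => ?_
  simp only [Matrix.of_apply, mul_ite, mul_one, mul_zero]
  exact if_congr ⟨fun h => ⟨h.1, by omega⟩, fun h => ⟨h.1, by omega⟩⟩ rfl rfl

lemma entry_lie_toMatrix'_E (A : Matrix P.Box P.Box ℂ) {a a' : Fin P.N} {i i' : ℤ}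
    (hi : 0 ≤ i ∧ i < P.r a) (hi' : 0 ≤ i' ∧ i' < P.r a') :
    P.entry ⁅LinearMap.toMatrix' P.E, A⁆ a i a' i' =
      P.entry A a (i - 1) a' i' - P.entry A a i a' (i' + 1) := by
  obtain ⟨b, rfl, rfl⟩ := exists_box hi.1 hi.2
  obtain ⟨b', rfl, rfl⟩ := exists_box hi'.1 hi'.2
  rw [entry_box, Ring.lie_def, Matrix.sub_apply, toMatrix'_E_mul_apply, mul_toMatrix'_E_apply]

lemma mem_gradedPiece_H_iff (X : Module.End ℂ P.V) (j : ℤ) :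
    X ∈ gradedPiece P.H j ↔
      ∀ b b', P.col b - P.col b' ≠ j → LinearMap.toMatrix' X b b' = 0 := by
  have hH : LinearMap.toMatrix' P.H = Matrix.diagonal fun b => (P.col b : ℂ) := by
    rw [H, LinearMap.toMatrix'_toLin']
  have hentry : ∀ b b', LinearMap.toMatrix' (⁅P.H, X⁆ - (j : ℂ) • X) b b' =
      ((P.col b - P.col b' - j : ℤ) : ℂ) * LinearMap.toMatrix' X b b' := by
    intro b b'
    rw [map_sub, LinearMap.toMatrix'_lie, hH, map_smul, Ring.lie_def]
    simp only [Matrix.sub_apply, Matrix.diagonal_mul, Matrix.mul_diagonal, Matrix.smul_apply,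
      smul_eq_mul]
    push_cast
    ring
  rw [gradedPiece, Set.mem_ofPred_eq, ← sub_eq_zero, ← LinearMap.toMatrix'.injective.eq_iff,
    map_zero, ← Matrix.ext_iff]
  simp only [hentry, Matrix.zero_apply, mul_eq_zero, Int.cast_eq_zero, sub_eq_zero]
  exact forall₂_congr fun b b' => ⟨fun h hne => h.resolve_left hne, or_iff_not_imp_left.mpr⟩

lemma entry_eq_zero_of_commute_of_le {j : ℤ} (hj : j < 0) {A : Matrix P.Box P.Box ℂ}
    (hA : ∀ b b', P.col b - P.col b' ≠ j → A b b' = 0)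
    (hcomm : Commute (LinearMap.toMatrix' P.E) A)
    {a a' : Fin P.N} (h : a ≤ a') (n : ℕ) (i i' : ℤ) (hn : P.r a' ≤ i' + n) :
    P.entry A a i a' i' = 0 := by
  induction n generalizing i i' with
  | zero => exact entry_eq_zero (by omega)
  | succ n ih =>
    by_cases hbox : 0 ≤ i ∧ i < P.r a ∧ 0 ≤ i' ∧ i' < P.r a'
    swap
    · exact entry_eq_zero hbox
    by_cases hdeg : P.f a + 2 * i - (P.f a' + 2 * i') = j
    swap
    · exact entry_eq_zero_of_ne hA hdeg
    have hi : i + 1 < P.r a := by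
      obtain ⟨b', rfl, rfl⟩ := exists_box hbox.2.2.1 hbox.2.2.2
      have := col_le_last_of_le h
      simp only [col, last] at this
      omega
    have := entry_lie_toMatrix'_E A (a := a) (i := i + 1) (by omega) ⟨hbox.2.2.1, hbox.2.2.2⟩
    rw [commute_iff_lie_eq.mp hcomm, entry_zero, add_sub_cancel_right,
      ih (i + 1) (i' + 1) (by push_cast at hn; omega), sub_zero] at this
    exact this.symm

lemma entry_eq_zero_of_commute_of_ge {j : ℤ} (hj : j < 0) {A : Matrix P.Box P.Box ℂ}
    (hA : ∀ b b', P.col b - P.col b' ≠ j → A b b' = 0)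
    (hcomm : Commute (LinearMap.toMatrix' P.E) A)
    {a a' : Fin P.N} (h : a' ≤ a) (n : ℕ) (i i' : ℤ) (hn : i < n) :
    P.entry A a i a' i' = 0 := by
  induction n generalizing i i' with
  | zero => exact entry_eq_zero (by omega)
  | succ n ih =>
    by_cases hbox : 0 ≤ i ∧ i < P.r a ∧ 0 ≤ i' ∧ i' < P.r a'
    swap
    · exact entry_eq_zero hbox
    by_cases hdeg : P.f a + 2 * i - (P.f a' + 2 * i') = j
    swap
    · exact entry_eq_zero_of_ne hA hdeg
    have hi' : 1 ≤ i' := by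
      obtain ⟨b, rfl, rfl⟩ := exists_box hbox.1 hbox.2.1
      have := f_le_col_of_le h
      simp only [col] at this
      omega
    have := entry_lie_toMatrix'_E A (a' := a') (i' := i' - 1) ⟨hbox.1, hbox.2.1⟩ (by omega)
    rw [commute_iff_lie_eq.mp hcomm, entry_zero, sub_add_cancel,
      ih (i - 1) (i' - 1) (by push_cast at hn; omega), zero_sub, zero_eq_neg] at this
    exact this

lemma eq_zero_of_commute_E {j : ℤ} (hj : j < 0) {A : Matrix P.Box P.Box ℂ}
    (hA : ∀ b b', P.col b - P.col b' ≠ j → A b b' = 0)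
    (hcomm : Commute (LinearMap.toMatrix' P.E) A) : A = 0 := by
  ext b b'
  rw [← entry_box A, Matrix.zero_apply]
  rcases le_total b.1 b'.1 with h | h
  · exact entry_eq_zero_of_commute_of_le hj hA hcomm h (P.r b'.1) _ _ (by omega)
  · exact entry_eq_zero_of_commute_of_ge hj hA hcomm h (P.r b.1) _ _ (by have := b.2.2; omega)

variable (P) in
/-- Telescoping `B` along a diagonal, forwards if `a ≤ a'` and backwards otherwise: the direction
in which the nesting of the rows makes the sum vanish on the boundary of the pyramid. -/
def diagonalSum (B : Matrix P.Box P.Box ℂ) (a : Fin P.N) (i : ℤ) (a' : Fin P.N) (i' : ℤ) : ℂ :=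
  if a ≤ a' then ∑ t ∈ Finset.range (P.r a'), P.entry B a (i + 1 + t) a' (i' + t)
  else -∑ t ∈ Finset.range (P.r a), P.entry B a (i - t) a' (i' - 1 - t)

lemma diagonalSum_eq_zero_of_ne {j : ℤ} {B : Matrix P.Box P.Box ℂ}
    (hB : ∀ b b', P.col b - P.col b' ≠ j + 2 → B b b' = 0) {a a' : Fin P.N} {i i' : ℤ}
    (h : P.f a + 2 * i - (P.f a' + 2 * i') ≠ j) : P.diagonalSum B a i a' i' = 0 := by
  unfold diagonalSum
  split_ifs
  · exact Finset.sum_eq_zero fun t _ => entry_eq_zero_of_ne hB (by omega)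
  · exact neg_eq_zero.mpr (Finset.sum_eq_zero fun t _ => entry_eq_zero_of_ne hB (by omega))

lemma diagonalSum_neg_one_eq_zero {j : ℤ} (hj : -1 ≤ j) {B : Matrix P.Box P.Box ℂ}
    (hB : ∀ b b', P.col b - P.col b' ≠ j + 2 → B b b' = 0) {a a' : Fin P.N} {i' : ℤ}
    (hi' : 0 ≤ i' ∧ i' < P.r a') : P.diagonalSum B a (-1) a' i' = 0 := by
  unfold diagonalSum
  split_ifs with h
  · obtain ⟨b', rfl, rfl⟩ := exists_box hi'.1 hi'.2
    have := f_le_col_of_le h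
    simp only [col] at this
    exact Finset.sum_eq_zero fun t _ => entry_eq_zero_of_ne hB (by omega)
  · exact neg_eq_zero.mpr (Finset.sum_eq_zero fun t _ => entry_eq_zero (by omega))

lemma diagonalSum_r_eq_zero {j : ℤ} (hj : -1 ≤ j) {B : Matrix P.Box P.Box ℂ}
    (hB : ∀ b b', P.col b - P.col b' ≠ j + 2 → B b b' = 0) {a a' : Fin P.N} {i : ℤ}
    (hi : 0 ≤ i ∧ i < P.r a) : P.diagonalSum B a i a' (P.r a') = 0 := by
  unfold diagonalSum
  split_ifs with h
  · exact Finset.sum_eq_zero fun t _ => entry_eq_zero (by omega)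
  · obtain ⟨b, rfl, rfl⟩ := exists_box hi.1 hi.2
    have := col_le_last_of_le (le_of_not_ge h)
    simp only [col, last] at this
    exact neg_eq_zero.mpr (Finset.sum_eq_zero fun t _ => entry_eq_zero_of_ne hB (by omega))

lemma diagonalSum_sub_diagonalSum (B : Matrix P.Box P.Box ℂ) {a a' : Fin P.N} {i i' : ℤ}
    (hi : 0 ≤ i ∧ i < P.r a) (hi' : 0 ≤ i' ∧ i' < P.r a') :
    P.diagonalSum B a (i - 1) a' i' - P.diagonalSum B a i a' (i' + 1) = P.entry B a i a' i' := by
  unfold diagonalSum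
  split_ifs
  · let g : ℕ → ℂ := fun t => P.entry B a (i + t) a' (i' + t)
    have h1 : ∑ t ∈ Finset.range (P.r a'), P.entry B a (i - 1 + 1 + t) a' (i' + t) =
        ∑ t ∈ Finset.range (P.r a'), g t :=
      Finset.sum_congr rfl fun t _ => by simp only [g, sub_add_cancel]
    have h2 : ∑ t ∈ Finset.range (P.r a'), P.entry B a (i + 1 + t) a' (i' + 1 + t) =
        ∑ t ∈ Finset.range (P.r a'), g (t + 1) :=
      Finset.sum_congr rfl fun t _ => by simp only [g]; congr 1 <;> push_cast <;> ring
    rw [h1, h2, Finset.sum_range_eq_add_sum_range_succ g (entry_eq_zero (by omega))]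
    simp [g]
  · let g : ℕ → ℂ := fun t => P.entry B a (i - t) a' (i' - t)
    have h1 : ∑ t ∈ Finset.range (P.r a), P.entry B a (i - 1 - t) a' (i' - 1 - t) =
        ∑ t ∈ Finset.range (P.r a), g (t + 1) :=
      Finset.sum_congr rfl fun t _ => by simp only [g]; congr 1 <;> push_cast <;> ring
    have h2 : ∑ t ∈ Finset.range (P.r a), P.entry B a (i - t) a' (i' + 1 - 1 - t) =
        ∑ t ∈ Finset.range (P.r a), g t :=
      Finset.sum_congr rfl fun t _ => by simp only [g, add_sub_cancel_right]
    rw [h1, h2, Finset.sum_range_eq_add_sum_range_succ g (entry_eq_zero (by omega))]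
    simp [g]

lemma exists_lie_toMatrix'_E_eq {j : ℤ} (hj : -1 ≤ j) {B : Matrix P.Box P.Box ℂ}
    (hB : ∀ b b', P.col b - P.col b' ≠ j + 2 → B b b' = 0) :
    ∃ X : Matrix P.Box P.Box ℂ, (∀ b b', P.col b - P.col b' ≠ j → X b b' = 0) ∧
      ⁅LinearMap.toMatrix' P.E, X⁆ = B := by
  refine ⟨Matrix.of fun b b' => P.diagonalSum B b.1 b.2 b'.1 b'.2,
    fun b b' h => diagonalSum_eq_zero_of_ne hB h, ?_⟩
  ext b b'
  have hb : 0 ≤ (b.2 : ℤ) ∧ (b.2 : ℤ) < P.r b.1 := ⟨by omega, by have := b.2.2; omega⟩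
  have hb' : 0 ≤ (b'.2 : ℤ) ∧ (b'.2 : ℤ) < P.r b'.1 := ⟨by omega, by have := b'.2.2; omega⟩
  rw [← entry_box ⁅_, _⁆, entry_lie_toMatrix'_E _ hb hb', entry_of, entry_of, ← entry_box B,
    ← diagonalSum_sub_diagonalSum B hb hb']
  congr 1
  · split_ifs with h
    · rfl
    · rw [show (b.2 : ℤ) - 1 = -1 by omega, diagonalSum_neg_one_eq_zero hj hB hb']
  · split_ifs with h
    · rfl
    · rw [show (b'.2 : ℤ) + 1 = P.r b'.1 by omega, diagonalSum_r_eq_zero hj hB hb]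

lemma injOn_lie_E {j : ℤ} (hj : j ≤ -1) :
    Set.InjOn (fun x => ⁅P.E, x⁆) (gradedPiece P.H j) := by
  intro x hx y hy hxy
  have hxy' : x - y ∈ gradedPiece P.H j := by
    simp only [gradedPiece, Set.mem_ofPred_eq, Ring.lie_def] at hx hy ⊢
    rw [mul_sub, sub_mul, smul_sub, ← hx, ← hy]
    abel
  rw [← sub_eq_zero, ← LinearMap.toMatrix'.injective.eq_iff, map_zero]
  refine eq_zero_of_commute_E (by omega) ((mem_gradedPiece_H_iff _ j).mp hxy') ?_
  rw [commute_iff_lie_eq, ← LinearMap.toMatrix'_lie, Ring.lie_def, mul_sub, sub_mul,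
    sub_sub_sub_comm, ← Ring.lie_def, ← Ring.lie_def, sub_eq_zero.mpr hxy, map_zero]

lemma surjOn_lie_E {j : ℤ} (hj : -1 ≤ j) :
    Set.SurjOn (fun x => ⁅P.E, x⁆) (gradedPiece P.H j) (gradedPiece P.H (j + 2)) := by
  intro y hy
  obtain ⟨X, hX, hEX⟩ := exists_lie_toMatrix'_E_eq hj ((mem_gradedPiece_H_iff y _).mp hy)
  refine ⟨Matrix.toLin' X, (mem_gradedPiece_H_iff _ j).mpr (by simpa using hX), ?_⟩
  apply LinearMap.toMatrix'.injective
  rw [LinearMap.toMatrix'_lie, LinearMap.toMatrix'_toLin', hEX]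

lemma isGoodPair_H_E : IsGoodPair P.H P.E :=
  ⟨fun _ hj => injOn_lie_E hj, fun _ hj => surjOn_lie_E hj⟩

section parity

variable (π : Fin P.N → Fin 2) (i : Fin 2)

lemma E_mem_Vpart : ∀ v ∈ P.Vpart π i, P.E v ∈ P.Vpart π i := by
  intro v hv b hb
  rw [E_apply, extend]
  split_ifs
  exacts [hv _ hb, rfl]

lemma H_mem_Vpart : ∀ v ∈ P.Vpart π i, P.H v ∈ P.Vpart π i := by
  intro v hv b hb
  rw [H_apply, hv b hb, mul_zero]

lemma map_ker_E_restrict_pow (hE : ∀ v ∈ P.Vpart π i, P.E v ∈ P.Vpart π i) (k : ℕ) :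
    (LinearMap.ker (P.E.restrict hE ^ k)).map (P.Vpart π i).subtype =
      Pi.spanSubset ℂ {b : P.Box | π b.1 = i ∧ P.r b.1 ≤ (b.2 : ℕ) + k} := by
  ext v
  rw [Module.End.pow_restrict, LinearMap.ker_restrict, Submodule.map_comap_subtype,
    Submodule.mem_inf, LinearMap.mem_ker, E_pow_apply_eq_zero_iff, Pi.mem_spanSubset_iff]
  simp only [Set.mem_ofPred_eq, not_and_or, not_le]
  constructor
  · rintro ⟨hv, h⟩ b (hb | hb)
    exacts [hv b hb, h b hb]
  · intro h
    exact ⟨fun b hb => h b (Or.inl hb), fun b hb => h b (Or.inr hb)⟩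

lemma ncard_setOf_r_le_add (k : ℕ) :
    {b : P.Box | π b.1 = i ∧ P.r b.1 ≤ (b.2 : ℕ) + k}.ncard =
      ∑ a ∈ Finset.univ.filter (fun a => π a = i), min k (P.r a) := by
  rw [Set.ncard_eq_toFinset_card', Set.toFinset_ofPred, Finset.card_filter, Fintype.sum_sigma,
    Finset.sum_filter]
  refine Finset.sum_congr rfl fun a _ => ?_
  split_ifs with ha
  · simp only [ha, true_and]
    rw [← Finset.card_filter, Fin.card_filter_le_add]
  · simp [ha]

lemma finrank_ker_E_restrict_pow (hE : ∀ v ∈ P.Vpart π i, P.E v ∈ P.Vpart π i) (k : ℕ) :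
    Module.finrank ℂ (LinearMap.ker (P.E.restrict hE ^ k)) =
      ∑ a ∈ Finset.univ.filter (fun a => π a = i), min k (P.r a) := by
  rw [← Submodule.finrank_map_subtype_eq, map_ker_E_restrict_pow, Pi.dim_spanSubset,
    ncard_setOf_r_le_add]

end parity

end Pyramid

/-- Let `P` be a pyramid with a parity assignment `π` on its rows,
and let `p` (resp. `q`) be the multiset of lengths of the rows `j` with `π j = 0`
(resp. `π j = 1`).  Then `e(P)` and `h(P)` both preserve `V(P)_0` and `V(P)_1`; the
restriction of `e(P)` to `V(P)_0` is nilpotent of Jordan type `p` and its restriction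
to `V(P)_1` is nilpotent of Jordan type `q`; `⁅h(P), e(P)⁆ = 2 • e(P)`; and the pair
`(h(P), e(P))` is good in `End(V(P))`.  (This is the forward direction of the
classification of good `ℤ`-gradings of `gl(m|n)` by pyramids.) -/
theorem pyramid_good_grading_super (P : Pyramid) (π : Fin P.N → Fin 2) :
    ∃ (hE0 : ∀ v ∈ P.Vpart π 0, P.E v ∈ P.Vpart π 0)
      (hE1 : ∀ v ∈ P.Vpart π 1, P.E v ∈ P.Vpart π 1)
      (_ : ∀ v ∈ P.Vpart π 0, P.H v ∈ P.Vpart π 0)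
      (_ : ∀ v ∈ P.Vpart π 1, P.H v ∈ P.Vpart π 1),
      IsNilpotent (P.E.restrict hE0) ∧
      (∀ k : ℕ, Module.finrank ℂ (LinearMap.ker (P.E.restrict hE0 ^ k)) =
        ∑ j ∈ Finset.univ.filter (fun j : Fin P.N => π j = 0), min k (P.r j)) ∧
      IsNilpotent (P.E.restrict hE1) ∧
      (∀ k : ℕ, Module.finrank ℂ (LinearMap.ker (P.E.restrict hE1 ^ k)) =
        ∑ j ∈ Finset.univ.filter (fun j : Fin P.N => π j = 1), min k (P.r j)) ∧
      ⁅P.H, P.E⁆ = (2 : ℂ) • P.E ∧ IsGoodPair P.H P.E :=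
  ⟨P.E_mem_Vpart π 0, P.E_mem_Vpart π 1, P.H_mem_Vpart π 0, P.H_mem_Vpart π 1,
    Module.End.isNilpotent.restrict _ P.isNilpotent_E, P.finrank_ker_E_restrict_pow π 0 _,
    Module.End.isNilpotent.restrict _ P.isNilpotent_E, P.finrank_ker_E_restrict_pow π 1 _,
    P.lie_H_E, P.isGoodPair_H_E⟩
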